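/- Let f be smooth with f'''(u) < 0 for all u in an interval J, and let q(u_1,u_2,u_3) = (1/(2√2 π)) ∫_{-1}^{1}∫_{-1}^{1} f( ((1+u)/2)((1+v)/2)u_1 + ((1+u)/2)((1-v)/2)u_2 + ((1-u)/2)u_3 )/√((1-u)(1-v²)) du dv. Then all third partial derivatives of q are negative: ∂³q/∂u_i∂u_j∂u_k < 0 for all i,j,k ∈ {1,2,3}, whenever u_1, u_2, u_3 ∈ J. -/

import Mathlib

open Real Filter Topology Set

/-- Partial derivative of `F : (Fin 3 → ℝ) → ℝ` in the `i`-th coordinate at `u`. -/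
noncomputable def pd (F : (Fin 3 → ℝ) → ℝ) (i : Fin 3) (u : Fin 3 → ℝ) : ℝ :=
  deriv (fun x => F (Function.update u i x)) (u i)

/-- The explicit Euler-Poisson-Darboux solution given by the double integral. -/
noncomputable def qEPD (f : ℝ → ℝ) (u : Fin 3 → ℝ) : ℝ :=
  (1 / (2 * Real.sqrt 2 * π)) *
    ∫ x in (-1:ℝ)..1, ∫ y in (-1:ℝ)..1,
      f (((1 + x) / 2) * ((1 + y) / 2) * u 0 + ((1 + x) / 2) * ((1 - y) / 2) * u 1 +
          ((1 - x) / 2) * u 2)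
        / Real.sqrt ((1 - x) * (1 - y ^ 2))

noncomputable section EPD

/-- weights -/
def ww (i : Fin 3) (p : ℝ × ℝ) : ℝ :=
  if i = 0 then (1 + p.1) / 2 * ((1 + p.2) / 2)
  else if i = 1 then (1 + p.1) / 2 * ((1 - p.2) / 2)
  else (1 - p.1) / 2

def kk (p : ℝ × ℝ) : ℝ := (Real.sqrt ((1 - p.1) * (1 - p.2 ^ 2)))⁻¹

def SS : Set (ℝ × ℝ) := Ioo (-1 : ℝ) 1 ×ˢ Ioo (-1 : ℝ) 1

def μS : MeasureTheory.Measure (ℝ × ℝ) := MeasureTheory.volume.restrict SS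

def arg3 (u : Fin 3 → ℝ) (p : ℝ × ℝ) : ℝ := ww 0 p * u 0 + ww 1 p * u 1 + ww 2 p * u 2

def TT (g : ℝ → ℝ) (c : ℝ × ℝ → ℝ) (u : Fin 3 → ℝ) : ℝ :=
  ∫ p, g (arg3 u p) * c p * kk p ∂μS

lemma ww_cont (i : Fin 3) : Continuous (ww i) := by
  fin_cases i <;> · unfold ww; simp; fun_prop

lemma ww_sum (p : ℝ × ℝ) : ww 0 p + ww 1 p + ww 2 p = 1 := by
  simp [ww]; ring

lemma ww_pos {p : ℝ × ℝ} (hp : p ∈ SS) (i : Fin 3) : 0 < ww i p := by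
  obtain ⟨⟨h1, h2⟩, h3, h4⟩ := hp
  fin_cases i <;> simp [ww] <;> nlinarith

lemma ww_le_one {p : ℝ × ℝ} (hp : p ∈ SS) (i : Fin 3) : ww i p ≤ 1 := by
  obtain ⟨⟨h1, h2⟩, h3, h4⟩ := hp
  fin_cases i <;> simp [ww] <;> nlinarith

lemma kk_nonneg (p : ℝ × ℝ) : 0 ≤ kk p := by
  simp [kk, Real.sqrt_nonneg]

lemma kk_pos {p : ℝ × ℝ} (hp : p ∈ SS) : 0 < kk p := by
  obtain ⟨⟨h1, h2⟩, h3, h4⟩ := hp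
  have hx : (0:ℝ) < 1 - p.1 := by linarith
  have hy : (0:ℝ) < 1 - p.2 ^ 2 := by nlinarith
  have : (0:ℝ) < (1 - p.1) * (1 - p.2 ^ 2) := mul_pos hx hy
  simp only [kk]
  positivity

lemma kk_meas : Measurable kk := by
  apply Measurable.inv
  exact (Real.continuous_sqrt.comp (by fun_prop)).measurable

lemma SS_meas : MeasurableSet SS := (measurableSet_Ioo).prod measurableSet_Ioo

lemma arg3_mem {cc dd : ℝ} {u : Fin 3 → ℝ} (hu : ∀ j, u j ∈ Ioo cc dd)
    {p : ℝ × ℝ} (hp : p ∈ SS) : arg3 u p ∈ Ioo cc dd := by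
  have h0 := ww_pos hp 0
  have h1 := ww_pos hp 1
  have h2 := ww_pos hp 2
  have hs := ww_sum p
  obtain ⟨a0, b0⟩ := hu 0
  obtain ⟨a1, b1⟩ := hu 1
  obtain ⟨a2, b2⟩ := hu 2
  have ecc : ww 0 p * cc + ww 1 p * cc + ww 2 p * cc = cc := by
    have : (ww 0 p + ww 1 p + ww 2 p) * cc = 1 * cc := by rw [hs]
    nlinarith [this]
  have edd : ww 0 p * dd + ww 1 p * dd + ww 2 p * dd = dd := by
    have : (ww 0 p + ww 1 p + ww 2 p) * dd = 1 * dd := by rw [hs]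
    nlinarith [this]
  constructor
  · simp only [arg3]
    have := mul_lt_mul_of_pos_left a0 h0
    have := mul_lt_mul_of_pos_left a1 h1
    have := mul_lt_mul_of_pos_left a2 h2
    linarith
  · simp only [arg3]
    have := mul_lt_mul_of_pos_left b0 h0
    have := mul_lt_mul_of_pos_left b1 h1
    have := mul_lt_mul_of_pos_left b2 h2
    linarith

lemma arg3_abs_le {u : Fin 3 → ℝ} {R : ℝ} (hu : ∀ j, |u j| ≤ R)
    {p : ℝ × ℝ} (hp : p ∈ SS) : |arg3 u p| ≤ R := by
  have h0 := ww_pos hp 0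
  have h1 := ww_pos hp 1
  have h2 := ww_pos hp 2
  have hs := ww_sum p
  have a0 := abs_le.1 (hu 0); have a1 := abs_le.1 (hu 1); have a2 := abs_le.1 (hu 2)
  have eR : ww 0 p * R + ww 1 p * R + ww 2 p * R = R := by
    have : (ww 0 p + ww 1 p + ww 2 p) * R = 1 * R := by rw [hs]
    nlinarith [this]
  rw [abs_le]
  constructor
  · simp only [arg3]
    have := mul_le_mul_of_nonneg_left a0.1 h0.le
    have := mul_le_mul_of_nonneg_left a1.1 h1.le
    have := mul_le_mul_of_nonneg_left a2.1 h2.le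
    nlinarith
  · simp only [arg3]
    have := mul_le_mul_of_nonneg_left a0.2 h0.le
    have := mul_le_mul_of_nonneg_left a1.2 h1.le
    have := mul_le_mul_of_nonneg_left a2.2 h2.le
    linarith

end EPD
section EPD2
open MeasureTheory

lemma int_one_div_sqrt_one_sub : IntegrableOn (fun x : ℝ => (Real.sqrt (1 - x))⁻¹) (Ioo (-1:ℝ) 1) := by
  have h1 : IntervalIntegrable (fun x : ℝ => x ^ (-(1/2) : ℝ)) volume 0 2 :=
    intervalIntegral.intervalIntegrable_rpow' (by norm_num)
  have h2 : IntervalIntegrable (fun x : ℝ => (1 - x) ^ (-(1/2) : ℝ)) volume (-1) 1 := by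
    have := h1.comp_sub_left 1
    norm_num at this
    exact this.symm
  have h3 : IntegrableOn (fun x : ℝ => (1 - x) ^ (-(1/2) : ℝ)) (Ioo (-1:ℝ) 1) := by
    have := (intervalIntegrable_iff_integrableOn_Ioc_of_le (by norm_num : (-1:ℝ) ≤ 1)).mp h2
    exact this.mono_set Ioo_subset_Ioc_self
  refine h3.congr_fun (fun x hx => ?_) measurableSet_Ioo
  beta_reduce
  rw [Real.rpow_neg (by linarith [hx.2] : (0:ℝ) ≤ 1 - x), Real.sqrt_eq_rpow]

lemma int_one_div_sqrt_one_add : IntegrableOn (fun x : ℝ => (Real.sqrt (1 + x))⁻¹) (Ioo (-1:ℝ) 1) := by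
  have h1 : IntervalIntegrable (fun x : ℝ => x ^ (-(1/2) : ℝ)) volume 0 2 :=
    intervalIntegral.intervalIntegrable_rpow' (by norm_num)
  have h2 : IntervalIntegrable (fun x : ℝ => (1 + x) ^ (-(1/2) : ℝ)) volume (-1) 1 := by
    have := h1.comp_add_left 1
    norm_num at this
    exact this
  have h3 : IntegrableOn (fun x : ℝ => (1 + x) ^ (-(1/2) : ℝ)) (Ioo (-1:ℝ) 1) := by
    have := (intervalIntegrable_iff_integrableOn_Ioc_of_le (by norm_num : (-1:ℝ) ≤ 1)).mp h2
    exact this.mono_set Ioo_subset_Ioc_self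
  refine h3.congr_fun (fun x hx => ?_) measurableSet_Ioo
  beta_reduce
  rw [Real.rpow_neg (by linarith [hx.1] : (0:ℝ) ≤ 1 + x), Real.sqrt_eq_rpow]

lemma int_one_div_sqrt_one_sub_sq :
    IntegrableOn (fun x : ℝ => (Real.sqrt (1 - x ^ 2))⁻¹) (Ioo (-1:ℝ) 1) := by
  have hmeas : Measurable (fun x : ℝ => (Real.sqrt (1 - x ^ 2))⁻¹) :=
    ((Real.continuous_sqrt.comp
      (by fun_prop : Continuous fun x : ℝ => 1 - x ^ 2)).measurable).inv
  refine Integrable.mono' (int_one_div_sqrt_one_sub.add int_one_div_sqrt_one_add)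
    hmeas.aestronglyMeasurable.restrict ?_
  filter_upwards [ae_restrict_mem measurableSet_Ioo] with x hx
  obtain ⟨hx1, hx2⟩ := hx
  have h1 : (0:ℝ) < 1 - x := by linarith
  have h2 : (0:ℝ) < 1 + x := by linarith
  rw [Real.norm_eq_abs, abs_of_nonneg (inv_nonneg.2 (Real.sqrt_nonneg _))]
  rcases le_total 0 x with h | h
  · have hle : Real.sqrt (1 - x) ≤ Real.sqrt (1 - x ^ 2) := Real.sqrt_le_sqrt (by nlinarith)
    have hp : 0 < Real.sqrt (1 - x) := Real.sqrt_pos.2 h1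
    have hinv : (Real.sqrt (1 - x ^ 2))⁻¹ ≤ (Real.sqrt (1 - x))⁻¹ := by
      apply inv_anti₀ hp hle
    have hnn : (0:ℝ) ≤ (Real.sqrt (1 + x))⁻¹ := inv_nonneg.2 (Real.sqrt_nonneg _)
    simpa using le_trans hinv (by linarith)
  · have hle : Real.sqrt (1 + x) ≤ Real.sqrt (1 - x ^ 2) := Real.sqrt_le_sqrt (by nlinarith)
    have hp : 0 < Real.sqrt (1 + x) := Real.sqrt_pos.2 h2
    have hinv : (Real.sqrt (1 - x ^ 2))⁻¹ ≤ (Real.sqrt (1 + x))⁻¹ := by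
      apply inv_anti₀ hp hle
    have hnn : (0:ℝ) ≤ (Real.sqrt (1 - x))⁻¹ := inv_nonneg.2 (Real.sqrt_nonneg _)
    simpa using le_trans hinv (by linarith)

end EPD2
section EPD3
open MeasureTheory

lemma μS_eq : μS = (volume.restrict (Ioo (-1:ℝ) 1)).prod (volume.restrict (Ioo (-1:ℝ) 1)) := by
  rw [μS, SS, MeasureTheory.Measure.volume_eq_prod, Measure.prod_restrict]

lemma kk_int : Integrable kk μS := by
  have h : Integrable (fun p : ℝ × ℝ =>
      (Real.sqrt (1 - p.1))⁻¹ * (Real.sqrt (1 - p.2 ^ 2))⁻¹) μS := by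
    rw [μS_eq]
    exact Integrable.mul_prod int_one_div_sqrt_one_sub int_one_div_sqrt_one_sub_sq
  refine h.congr ?_
  filter_upwards [ae_restrict_mem SS_meas] with p hp
  obtain ⟨⟨h1, h2⟩, h3, h4⟩ := hp
  simp only [kk]
  rw [Real.sqrt_mul (by linarith), mul_inv]

lemma arg3_cont (v : Fin 3 → ℝ) : Continuous (fun p => arg3 v p) := by
  unfold arg3
  exact (((ww_cont 0).mul continuous_const).add ((ww_cont 1).mul continuous_const)).add
    ((ww_cont 2).mul continuous_const)

lemma integrableTT (g : ℝ → ℝ) (hg : Continuous g) (c : ℝ × ℝ → ℝ) (hc : Continuous c)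
    (hc1 : ∀ p ∈ SS, |c p| ≤ 1) (v : Fin 3 → ℝ) {R : ℝ} (hR : ∀ j, |v j| ≤ R) :
    Integrable (fun p => g (arg3 v p) * c p * kk p) μS := by
  have hR0 : (0:ℝ) ≤ R := le_trans (abs_nonneg _) (hR 0)
  obtain ⟨M, hM⟩ :=
    (isCompact_Icc (a := -R) (b := R)).exists_bound_of_continuousOn hg.continuousOn
  have hMnn : 0 ≤ M := le_trans (norm_nonneg _) (hM 0 (by constructor <;> linarith))
  refine (kk_int.const_mul M).mono' ?_ ?_
  · exact (((hg.comp (arg3_cont v)).mul hc).measurable.mul kk_meas).aestronglyMeasurable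
  · filter_upwards [ae_restrict_mem SS_meas] with p hp
    have h1 : ‖g (arg3 v p)‖ ≤ M := hM _ (abs_le.1 (arg3_abs_le hR hp))
    have h2 := hc1 p hp
    rw [Real.norm_eq_abs, abs_mul, abs_mul, abs_of_nonneg (kk_nonneg p)]
    calc |g (arg3 v p)| * |c p| * kk p ≤ M * 1 * kk p := by
          apply mul_le_mul _ le_rfl (kk_nonneg p) (by positivity)
          exact mul_le_mul h1 h2 (abs_nonneg _) hMnn
      _ = M * kk p := by ring

end EPD3
section EPD4
open MeasureTheory Metric

lemma arg3_update (u : Fin 3 → ℝ) (i : Fin 3) (p : ℝ × ℝ) :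
    (fun t => arg3 (Function.update u i t) p) =
      fun t => t * ww i p + (arg3 u p - u i * ww i p) := by
  funext t
  fin_cases i <;> simp [arg3, Function.update] <;> ring

lemma update_abs_le (u : Fin 3 → ℝ) (i : Fin 3) {t : ℝ} (ht : t ∈ ball (u i) 1) (j : Fin 3) :
    |Function.update u i t j| ≤ |u 0| + |u 1| + |u 2| + 1 := by
  have htt : |t - u i| < 1 := by rwa [mem_ball, Real.dist_eq] at ht
  have h3 : |t| ≤ |u i| + 1 := by
    have := abs_sub_abs_le_abs_sub t (u i)
    linarith
  have hui : |u i| ≤ |u 0| + |u 1| + |u 2| := by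
    fin_cases i <;> simp <;>
      linarith [abs_nonneg (u 0), abs_nonneg (u 1), abs_nonneg (u 2)]
  rcases eq_or_ne j i with rfl | hne
  · rw [Function.update_self]; linarith
  · rw [Function.update_of_ne hne]
    have : |u j| ≤ |u 0| + |u 1| + |u 2| := by
      fin_cases j <;> simp <;>
        linarith [abs_nonneg (u 0), abs_nonneg (u 1), abs_nonneg (u 2)]
    linarith

lemma hasDerivAt_TT (g : ℝ → ℝ) (hg : ContDiff ℝ (⊤ : ℕ∞) g) (c : ℝ × ℝ → ℝ) (hc : Continuous c)
    (hc1 : ∀ p ∈ SS, |c p| ≤ 1) (u : Fin 3 → ℝ) (i : Fin 3) :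
    HasDerivAt (fun t => TT g c (Function.update u i t))
      (TT (deriv g) (fun p => c p * ww i p) u) (u i) := by
  set R : ℝ := |u 0| + |u 1| + |u 2| + 1 with hRdef
  have hgd : Differentiable ℝ g := (contDiff_infty_iff_deriv.mp hg).1
  have hg' : Continuous (deriv g) := ((contDiff_infty_iff_deriv.mp hg).2).continuous
  obtain ⟨M, hM⟩ := (isCompact_Icc (a := -R) (b := R)).exists_bound_of_continuousOn
    hg'.continuousOn
  have hRu : ∀ j, |u j| ≤ R := by
    intro j
    have e0 : |u 0| ≤ R := by simp only [hRdef]; linarith [abs_nonneg (u 1), abs_nonneg (u 2)]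
    have e1 : |u 1| ≤ R := by simp only [hRdef]; linarith [abs_nonneg (u 0), abs_nonneg (u 2)]
    have e2 : |u 2| ≤ R := by simp only [hRdef]; linarith [abs_nonneg (u 0), abs_nonneg (u 1)]
    fin_cases j
    exacts [e0, e1, e2]
  set F : ℝ → ℝ × ℝ → ℝ := fun t p => g (arg3 (Function.update u i t) p) * c p * kk p with hF
  set F' : ℝ → ℝ × ℝ → ℝ :=
    fun t p => deriv g (arg3 (Function.update u i t) p) * (c p * ww i p) * kk p with hF'
  have key := hasDerivAt_integral_of_dominated_loc_of_deriv_le (μ := μS)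
    (F := F) (F' := F') (x₀ := u i) (bound := fun p => M * kk p) (s := Metric.ball (u i) 1) (Metric.ball_mem_nhds _ one_pos)
    ?_ ?_ ?_ ?_ ?_ ?_
  · have h1 : (fun t => TT g c (Function.update u i t)) = fun t => ∫ p, F t p ∂μS := rfl
    have h2 : TT (deriv g) (fun p => c p * ww i p) u = ∫ p, F' (u i) p ∂μS := by
      simp only [TT, hF', Function.update_eq_self]
    rw [h1, h2]
    exact key.2
  · filter_upwards with t
    exact (((hgd.continuous.comp ((arg3_cont _))).mul hc).measurable.mul
      kk_meas).aestronglyMeasurable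
  · simp only [hF, Function.update_eq_self]
    exact integrableTT g hgd.continuous c hc hc1 u hRu
  · exact (((hg'.comp ((arg3_cont _))).mul (hc.mul (ww_cont i))).measurable.mul
      kk_meas).aestronglyMeasurable
  · filter_upwards [ae_restrict_mem SS_meas] with p hp
    intro t ht
    have habs : |arg3 (Function.update u i t) p| ≤ R := arg3_abs_le (update_abs_le u i ht) hp
    have h1 : ‖deriv g (arg3 (Function.update u i t) p)‖ ≤ M := hM _ (abs_le.1 habs)
    have h2 : |c p * ww i p| ≤ 1 := by
      rw [abs_mul]
      have := hc1 p hp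
      have h0 := ww_pos hp i
      have h1' := ww_le_one hp i
      have : |ww i p| ≤ 1 := by rw [abs_of_nonneg h0.le]; exact h1'
      nlinarith [abs_nonneg (c p), abs_nonneg (ww i p), hc1 p hp]
    have hMnn : 0 ≤ M := le_trans (norm_nonneg _) h1
    simp only [hF']
    rw [Real.norm_eq_abs, abs_mul, abs_mul, abs_of_nonneg (kk_nonneg p)]
    calc |deriv g (arg3 (Function.update u i t) p)| * |c p * ww i p| * kk p
        ≤ M * 1 * kk p := by
          apply mul_le_mul _ le_rfl (kk_nonneg p) (by positivity)
          exact mul_le_mul h1 h2 (abs_nonneg _) hMnn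
      _ = M * kk p := by ring
  · exact kk_int.const_mul M
  · filter_upwards [ae_restrict_mem SS_meas] with p hp
    intro t ht
    have harg : HasDerivAt (fun s => arg3 (Function.update u i s) p) (ww i p) t := by
      rw [arg3_update u i p]
      simpa using ((hasDerivAt_id t).mul_const (ww i p)).add_const (arg3 u p - u i * ww i p)
    have hcomp : HasDerivAt (fun s => g (arg3 (Function.update u i s) p))
        (deriv g (arg3 (Function.update u i t) p) * ww i p) t :=
      (hgd.differentiableAt.hasDerivAt).comp t harg
    have := (hcomp.mul_const (c p)).mul_const (kk p)
    have heq : deriv g (arg3 (Function.update u i t) p) * ww i p * c p * kk p = F' t p := by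
      simp only [hF']; ring
    exact heq ▸ this

lemma pd_TT (g : ℝ → ℝ) (hg : ContDiff ℝ (⊤ : ℕ∞) g) (c : ℝ × ℝ → ℝ) (hc : Continuous c)
    (hc1 : ∀ p ∈ SS, |c p| ≤ 1) (u : Fin 3 → ℝ) (i : Fin 3) :
    pd (TT g c) i u = TT (deriv g) (fun p => c p * ww i p) u :=
  (hasDerivAt_TT g hg c hc hc1 u i).deriv

end EPD4
section EPD5
open MeasureTheory

lemma abs_le_one_5 {u : Fin 3 → ℝ} : ∀ j, |u j| ≤ |u 0| + |u 1| + |u 2| + 1 := by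
  intro j
  fin_cases j <;> simp <;>
    linarith [abs_nonneg (u 0), abs_nonneg (u 1), abs_nonneg (u 2)]

lemma TT_eq_integral (f : ℝ → ℝ) (hf : Continuous f) (u : Fin 3 → ℝ) :
    TT f (fun _ => 1) u =
      ∫ x in (-1:ℝ)..1, ∫ y in (-1:ℝ)..1,
        f (((1 + x) / 2) * ((1 + y) / 2) * u 0 + ((1 + x) / 2) * ((1 - y) / 2) * u 1 +
            ((1 - x) / 2) * u 2)
          / Real.sqrt ((1 - x) * (1 - y ^ 2)) := by
  have hint : Integrable (fun p => f (arg3 u p) * (fun _ : ℝ × ℝ => (1:ℝ)) p * kk p) μS :=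
    integrableTT f hf _ continuous_const (fun p _ => by norm_num) u abs_le_one_5
  rw [μS, SS] at hint
  rw [MeasureTheory.Measure.volume_eq_prod] at hint
  unfold TT μS SS
  rw [MeasureTheory.Measure.volume_eq_prod]
  rw [setIntegral_prod _ hint]
  rw [← MeasureTheory.integral_Ioc_eq_integral_Ioo,
    ← intervalIntegral.integral_of_le (by norm_num : (-1:ℝ) ≤ 1)]
  refine intervalIntegral.integral_congr fun x hx => ?_
  simp only
  rw [← MeasureTheory.integral_Ioc_eq_integral_Ioo,
    ← intervalIntegral.integral_of_le (by norm_num : (-1:ℝ) ≤ 1)]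
  refine intervalIntegral.integral_congr fun y hy => ?_
  simp only [arg3, ww, kk, div_eq_mul_inv, mul_one,
    if_neg (show ¬(2:Fin 3) = 0 from by decide), if_neg (show ¬(2:Fin 3) = 1 from by decide),
    if_pos rfl, if_neg (show ¬(1:Fin 3) = 0 from by decide)]
  norm_num

lemma cmul_bound (c : ℝ × ℝ → ℝ) (hc1 : ∀ p ∈ SS, |c p| ≤ 1) (i : Fin 3) :
    ∀ p ∈ SS, |c p * ww i p| ≤ 1 := by
  intro p hp
  rw [abs_mul]
  have h1 := hc1 p hp
  have h2 : |ww i p| ≤ 1 := by rw [abs_of_nonneg (ww_pos hp i).le]; exact ww_le_one hp i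
  nlinarith [abs_nonneg (c p), abs_nonneg (ww i p)]

lemma pd_const_mul (C : ℝ) (F : (Fin 3 → ℝ) → ℝ) (i : Fin 3) (u : Fin 3 → ℝ) :
    pd (fun v => C * F v) i u = C * pd F i u := by
  unfold pd
  exact deriv_const_mul_field C

end EPD5
section EPDMain
open MeasureTheory

/-- If `f''' < 0` on an open interval `J = (c,d)`, then all third partial derivatives
of `q = qEPD f` are negative whenever `u_1, u_2, u_3 ∈ J`. -/
theorem qEPD_third_derivs_neg (f : ℝ → ℝ) (hf : ContDiff ℝ (⊤ : ℕ∞) f) (c d : ℝ)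
    (hf3 : ∀ x ∈ Ioo c d, iteratedDeriv 3 f x < 0) :
    ∀ u : Fin 3 → ℝ, (∀ i, u i ∈ Ioo c d) →
      ∀ i j k : Fin 3, pd (pd (pd (qEPD f) k) j) i u < 0 := by
  intro u hu i j k
  have hf' : ContDiff ℝ (⊤ : ℕ∞) f := hf.of_le (by simp)
  have hg1 : ContDiff ℝ (⊤ : ℕ∞) (deriv f) := (contDiff_infty_iff_deriv.mp hf').2
  have hg2 : ContDiff ℝ (⊤ : ℕ∞) (deriv (deriv f)) := (contDiff_infty_iff_deriv.mp hg1).2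
  have hg3cont : Continuous (deriv (deriv (deriv f))) :=
    ((contDiff_infty_iff_deriv.mp hg2).2).continuous
  set C : ℝ := 1 / (2 * Real.sqrt 2 * π) with hCdef
  have hC : 0 < C := by
    rw [hCdef]
    have h2 : (0:ℝ) < Real.sqrt 2 := Real.sqrt_pos.2 (by norm_num)
    have := Real.pi_pos
    positivity
  have hb0 : ∀ p ∈ SS, |(fun _ : ℝ × ℝ => (1:ℝ)) p| ≤ 1 := fun p _ => by norm_num
  have e0 : qEPD f = fun v => C * TT f (fun _ => (1:ℝ)) v := by
    funext v
    unfold qEPD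
    rw [TT_eq_integral f hf'.continuous v]
  have e1 : pd (qEPD f) k =
      fun v => C * TT (deriv f) (fun p => (fun _ : ℝ × ℝ => (1:ℝ)) p * ww k p) v := by
    funext v
    rw [e0, pd_const_mul, pd_TT f hf' _ continuous_const hb0 v k]
  have hb1 := cmul_bound _ hb0 k
  have hcc1 : Continuous (fun p => (fun _ : ℝ × ℝ => (1:ℝ)) p * ww k p) :=
    continuous_const.mul (ww_cont k)
  have e2 : pd (pd (qEPD f) k) j =
      fun v => C * TT (deriv (deriv f))
        (fun p => (fun q => (fun _ : ℝ × ℝ => (1:ℝ)) q * ww k q) p * ww j p) v := by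
    funext v
    rw [e1, pd_const_mul, pd_TT (deriv f) hg1 _ hcc1 hb1 v j]
  have hb2 := cmul_bound _ hb1 j
  have hcc2 : Continuous (fun p => (fun q => (fun _ : ℝ × ℝ => (1:ℝ)) q * ww k q) p * ww j p) :=
    hcc1.mul (ww_cont j)
  have e3 : pd (pd (pd (qEPD f) k) j) i u =
      C * TT (deriv (deriv (deriv f)))
        (fun p => (fun q =>
          (fun r => (fun _ : ℝ × ℝ => (1:ℝ)) r * ww k r) q * ww j q) p * ww i p) u := by
    rw [e2, pd_const_mul, pd_TT (deriv (deriv f)) hg2 _ hcc2 hb2 u i]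
  have hb3 := cmul_bound _ hb2 i
  have hcc3 : Continuous (fun p =>
      (fun q => (fun r => (fun _ : ℝ × ℝ => (1:ℝ)) r * ww k r) q * ww j q) p * ww i p) :=
    hcc2.mul (ww_cont i)
  -- the third derivative of f is `deriv (deriv (deriv f))`
  have h3eq : iteratedDeriv 3 f = deriv (deriv (deriv f)) := by
    have h : (3:ℕ) = 0+1+1+1 := by norm_num
    rw [h, iteratedDeriv_succ, iteratedDeriv_succ, iteratedDeriv_succ, iteratedDeriv_zero]
  have hg3neg : ∀ x ∈ Ioo c d, deriv (deriv (deriv f)) x < 0 := by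
    intro x hx
    have := hf3 x hx
    rwa [h3eq] at this
  -- integrand and its properties
  set c3 : ℝ × ℝ → ℝ := fun p =>
    (fun q => (fun r => (fun _ : ℝ × ℝ => (1:ℝ)) r * ww k r) q * ww j q) p * ww i p with hc3def
  set h : ℝ × ℝ → ℝ := fun p => deriv (deriv (deriv f)) (arg3 u p) * c3 p * kk p with hhdef
  have hint3 : Integrable h μS :=
    integrableTT (deriv (deriv (deriv f))) hg3cont c3 hcc3 hb3 u abs_le_one_5
  have hneg : ∀ᵐ p ∂μS, h p < 0 := by
    filter_upwards [ae_restrict_mem SS_meas] with p hp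
    have h1 : deriv (deriv (deriv f)) (arg3 u p) < 0 := hg3neg _ (arg3_mem hu hp)
    have h2 : 0 < c3 p := by
      show (0:ℝ) < (1:ℝ) * ww k p * ww j p * ww i p
      exact mul_pos (mul_pos (mul_pos one_pos (ww_pos hp k)) (ww_pos hp j)) (ww_pos hp i)
    exact mul_neg_of_neg_of_pos (mul_neg_of_neg_of_pos h1 h2) (kk_pos hp)
  have hpos : 0 < ∫ p, (-h) p ∂μS := by
    refine (integral_pos_iff_support_of_nonneg_ae
      (by filter_upwards [hneg] with p hp
          simp only [Pi.zero_apply, Pi.neg_apply]; linarith)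
      hint3.neg).2 ?_
    have hs : ∀ᵐ p ∂μS, p ∈ Function.support (-h) := by
      filter_upwards [hneg] with p hp
      simp only [Function.mem_support, Pi.neg_apply]
      exact (neg_pos.2 hp).ne'
    have h0 : μS (Function.support (-h))ᶜ = 0 := by
      rw [ae_iff] at hs
      convert hs using 2
      rfl
    by_contra hcon
    rw [not_lt, le_zero_iff] at hcon
    have hle : μS Set.univ ≤ μS (Function.support (-h)) + μS (Function.support (-h))ᶜ := by
      rw [← Set.union_compl_self (Function.support (-h))]
      exact measure_union_le _ _
    have huniv : μS Set.univ = ENNReal.ofReal 2 * ENNReal.ofReal 2 := by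
      rw [μS, Measure.restrict_apply_univ, SS, MeasureTheory.Measure.volume_eq_prod,
        Measure.prod_prod, Real.volume_Ioo]
      norm_num
    rw [hcon, h0, huniv] at hle
    simp only [add_zero, nonpos_iff_eq_zero, mul_eq_zero, ENNReal.ofReal_eq_zero] at hle
    rcases hle with h' | h' <;> norm_num at h'
  have hfin : TT (deriv (deriv (deriv f))) c3 u < 0 := by
    have e : ∫ p, (-h) p ∂μS = - ∫ p, h p ∂μS := integral_neg _
    rw [e] at hpos
    have : (0:ℝ) < - TT (deriv (deriv (deriv f))) c3 u := hpos
    linarith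
  rw [e3]
  exact mul_neg_of_pos_of_neg hC hfin

end EPDMain
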